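/- Let (R, m) be a Noetherian local ring, I an ideal of R containing a non-zerodivisor, and x, y ∈ I a regular sequence on R such that J = (x, y) is a reduction of I with I^{n+1} = J·I^n for all n ≥ r. Then for every m ≥ r one has ~(I^{m+1}) = J·~(I^m). In particular the Ratliff-Rush reduction number of I with respect to J is at most the reduction number r_J(I). -/

import Mathlib

/-!
Write `J = (x, y)`. If `a ∈ ~(I^{m+1})`, then `a x^k ∈ I^{m+1+k} = J^{k+1} I^m` for some `k`.
Splitting `J^{j+1} = y^{j+1} R + x J^j` and cancelling `x` (a non-zerodivisor, with `y` regular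
modulo `x`) one power at a time turns this into `a = U + y^2 D` with `U ∈ J I^m` and
`x^{k+1} D ∈ I^{m+k}`. Then `(yD) x^{k+1}` and `(yD) y^{k+1}` both lie in `I^{m+k+1}`; as every
monomial of `J^{2s}` is divisible by `x^s` or `y^s`, this puts `yD` in `~(I^m)`, so
`a = U + y (yD) ∈ J ~(I^m)`. The reverse inclusion only needs `J ⊆ I`.
-/

/-- The Ratliff-Rush closure of the power `I^n`:  `⋃_{k≥0} (I^{n+k} : I^k)`. -/
noncomputable def rrPow {R : Type*} [CommRing R] (I : Ideal R) (n : ℕ) : Ideal R :=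
  ⨆ k : ℕ, (I ^ (n + k)).colon ((I ^ k : Ideal R) : Set R)

open Ideal
open scoped Pointwise

section RatliffRush

variable {R : Type*} [CommRing R] {I : Ideal R}

lemma mem_colon_pow_iff {n k : ℕ} {a : R} :
    a ∈ (I ^ (n + k)).colon ((I ^ k : Ideal R) : Set R) ↔ span {a} * I ^ k ≤ I ^ (n + k) := by
  rw [Submodule.mem_colon, span_singleton_mul_le_iff]
  rfl

lemma colon_pow_monotone (I : Ideal R) (n : ℕ) :
    Monotone fun k => (I ^ (n + k)).colon ((I ^ k : Ideal R) : Set R) := by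
  refine monotone_nat_of_le_succ fun k a ha => ?_
  rw [mem_colon_pow_iff] at ha ⊢
  calc span {a} * I ^ (k + 1) = span {a} * I ^ k * I := by rw [pow_succ, mul_assoc]
    _ ≤ I ^ (n + k) * I := mul_mono_left ha
    _ = I ^ (n + (k + 1)) := (pow_succ _ _).symm

lemma mem_rrPow_iff {n : ℕ} {a : R} :
    a ∈ rrPow I n ↔ ∃ k, span {a} * I ^ k ≤ I ^ (n + k) := by
  simp only [rrPow, Submodule.mem_iSup_of_directed _ (colon_pow_monotone I n).directed_le,
    mem_colon_pow_iff]

lemma pow_le_rrPow (I : Ideal R) (n : ℕ) : I ^ n ≤ rrPow I n :=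
  fun _ ha => mem_rrPow_iff.2 ⟨0, by simpa using (span_singleton_le_iff_mem _).2 ha⟩

lemma mul_rrPow_le (I : Ideal R) (n : ℕ) : I * rrPow I n ≤ rrPow I (n + 1) := by
  refine mul_le.2 fun b hb a ha => ?_
  obtain ⟨k, hk⟩ := mem_rrPow_iff.1 ha
  refine mem_rrPow_iff.2 ⟨k, ?_⟩
  calc span {b * a} * I ^ k = span {b} * (span {a} * I ^ k) := by
        rw [← span_singleton_mul_span_singleton, mul_assoc]
    _ ≤ I * I ^ (n + k) := mul_mono ((span_singleton_le_iff_mem _).2 hb) hk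
    _ = I ^ (n + 1 + k) := by rw [← pow_succ', Nat.add_right_comm]

lemma pow_add_eq_pow_mul_pow {J : Ideal R} {r : ℕ}
    (hred : ∀ n, r ≤ n → I ^ (n + 1) = J * I ^ n) {n : ℕ} (hn : r ≤ n) (s : ℕ) :
    I ^ (n + s) = J ^ s * I ^ n := by
  induction s with
  | zero => simp
  | succ s ih => rw [← add_assoc, hred _ (by omega), ih, pow_succ', mul_assoc]

lemma pow_mul_pow_mem_pow {x y : R} (hx : x ∈ I) (hy : y ∈ I) (i j : ℕ) :
    x ^ i * y ^ j ∈ I ^ (i + j) :=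
  pow_add I i j ▸ mul_mem_mul (pow_mem_pow hx i) (pow_mem_pow hy j)

end RatliffRush

section SpanPair

variable {R : Type*} [CommRing R]

lemma span_pair_pow_le_span_monomials (x y : R) (n : ℕ) :
    span {x, y} ^ n ≤ span {p | ∃ i j, i + j = n ∧ p = x ^ i * y ^ j} := by
  induction n with
  | zero =>
    rw [pow_zero, one_eq_top, top_le_iff, eq_top_iff_one]
    exact subset_span ⟨0, 0, rfl, by simp⟩
  | succ n ih =>
    calc span {x, y} ^ (n + 1) = span {x, y} * span {x, y} ^ n := pow_succ' _ _
      _ ≤ span {x, y} * span {p | ∃ i j, i + j = n ∧ p = x ^ i * y ^ j} := mul_mono_right ih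
      _ = span ({x, y} * {p | ∃ i j, i + j = n ∧ p = x ^ i * y ^ j}) := by rw [span_mul_span']
      _ ≤ _ := span_mono ?_
    rintro _ ⟨_, hxy, _, ⟨i, j, rfl, rfl⟩, rfl⟩
    rcases hxy with rfl | rfl
    · exact ⟨i + 1, j, by omega, by ring⟩
    · exact ⟨i, j + 1, by omega, by ring⟩

lemma monomial_mem_span_pair_pow (x y : R) (i j : ℕ) : x ^ i * y ^ j ∈ span {x, y} ^ (i + j) :=
  pow_mul_pow_mem_pow (subset_span (by simp)) (subset_span (by simp)) i j

lemma span_pair_pow_succ_le (x y : R) (n : ℕ) :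
    span {x, y} ^ (n + 1) ≤ span {y ^ (n + 1)} ⊔ span {x} * span {x, y} ^ n := by
  refine (span_pair_pow_le_span_monomials x y (n + 1)).trans (span_le.2 ?_)
  rintro _ ⟨_ | i, j, hij, rfl⟩
  · obtain rfl : j = n + 1 := by omega
    exact Submodule.mem_sup_left (by simp)
  · refine Submodule.mem_sup_right ?_
    rw [pow_succ', mul_assoc, show n = i + j by omega]
    exact mul_mem_mul (mem_span_singleton_self x) (monomial_mem_span_pair_pow x y i j)

lemma exists_eq_pow_mul_add_mul {x y : R} {M : Ideal R} {n : ℕ} {u : R}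
    (hu : u ∈ span {x, y} ^ (n + 1) * M) :
    ∃ c ∈ M, ∃ U ∈ span {x, y} ^ n * M, u = y ^ (n + 1) * c + x * U := by
  have hu' := mul_mono_left (span_pair_pow_succ_le x y n) hu
  rw [Ideal.sup_mul, mul_assoc] at hu'
  obtain ⟨_, hv, _, hw, rfl⟩ := Submodule.mem_sup.1 hu'
  obtain ⟨c, hc, rfl⟩ := mem_span_singleton_mul.1 hv
  obtain ⟨U, hU, rfl⟩ := mem_span_singleton_mul.1 hw
  exact ⟨c, hc, U, hU, rfl⟩

end SpanPair

section RegularPair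

variable {R : Type*} [CommRing R] {x y : R}

lemma mem_span_singleton_of_pow_mul_mem (hy : ∀ z : R, y * z ∈ span {x} → z ∈ span {x})
    {z : R} (s : ℕ) (h : y ^ s * z ∈ span {x}) : z ∈ span {x} := by
  induction s with
  | zero => simpa using h
  | succ s ih => exact ih (hy _ (by rwa [pow_succ', mul_assoc] at h))

lemma exists_mul_pow_eq_add_pow_mul (hx : x ∈ nonZeroDivisors R)
    (hy : ∀ z : R, y * z ∈ span {x} → z ∈ span {x}) {M : Ideal R} {t s : ℕ} {a U D : R}
    (hU : U ∈ span {x, y} ^ (t + 2) * M) (hD : x ^ (s + 1) * D ∈ span {x, y} ^ s * M)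
    (h : a * x ^ (t + 1) = U + y ^ (t + 3) * D) :
    ∃ U' ∈ span {x, y} ^ (t + 1) * M, ∃ D', a * x ^ t = U' + y ^ (t + 2) * D' ∧
      x ^ (s + 2) * D' ∈ span {x, y} ^ (s + 1) * M := by
  obtain ⟨c, hc, U', hU', rfl⟩ := exists_eq_pow_mul_add_mul hU
  obtain ⟨D', hD'⟩ : x ∣ c + y * D := mem_span_singleton.1 <|
    mem_span_singleton_of_pow_mul_mem hy (t + 2) <|
      mem_span_singleton.2 ⟨a * x ^ t - U', by linear_combination -h⟩
  refine ⟨U', hU', D', (mul_cancel_left_mem_nonZeroDivisors hx).1 ?_, ?_⟩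
  · linear_combination h + y ^ (t + 2) * hD'
  · have hxD : x ^ (s + 2) * D' = x ^ (s + 1) * c + y * (x ^ (s + 1) * D) := by
      linear_combination (-x ^ (s + 1)) * hD'
    refine hxD ▸ add_mem (mul_mem_mul (pow_mem_pow (subset_span (by simp)) _) hc) ?_
    rw [pow_succ' (span {x, y}) s, mul_assoc]
    exact mul_mem_mul (subset_span (by simp)) hD

lemma exists_eq_add_sq_mul (hx : x ∈ nonZeroDivisors R)
    (hy : ∀ z : R, y * z ∈ span {x} → z ∈ span {x}) {M : Ideal R} {a : R} :
    ∀ (t s : ℕ) {U D : R}, U ∈ span {x, y} ^ (t + 1) * M →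
      x ^ (s + 1) * D ∈ span {x, y} ^ s * M → a * x ^ t = U + y ^ (t + 2) * D →
      ∃ U' ∈ span {x, y} * M, ∃ D', a = U' + y ^ 2 * D' ∧
        x ^ (s + t + 1) * D' ∈ span {x, y} ^ (s + t) * M
  | 0, _, U, D, hU, hD, h => ⟨U, by simpa using hU, D, by simpa using h, hD⟩
  | t + 1, s, _, _, hU, hD, h => by
    obtain ⟨U', hU', D', h', hD'⟩ := exists_mul_pow_eq_add_pow_mul hx hy hU hD h
    have := exists_eq_add_sq_mul hx hy t (s + 1) hU' hD' h'
    rwa [show s + 1 + t = s + (t + 1) by omega] at this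

end RegularPair

section Reduction

variable {R : Type*} [CommRing R] {I : Ideal R} {x y : R} {r : ℕ}

lemma mem_rrPow_of_mul_pow_mem (hxI : x ∈ I) (hyI : y ∈ I)
    (hred : ∀ n, r ≤ n → I ^ (n + 1) = span {x, y} * I ^ n) {m s : ℕ} {z : R}
    (hzx : z * x ^ s ∈ I ^ (m + s)) (hzy : z * y ^ s ∈ I ^ (m + s)) :
    z ∈ rrPow I m := by
  have hzJ : span {z} * span {x, y} ^ (2 * s) ≤ I ^ (m + 2 * s) := by
    refine (mul_mono_right (span_pair_pow_le_span_monomials x y _)).trans ?_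
    rw [span_mul_span', span_le]
    rintro _ ⟨w, hw, _, ⟨i, j, hij, rfl⟩, rfl⟩
    rw [Set.mem_singleton_iff.1 hw]
    dsimp only
    rcases (by omega : s ≤ i ∨ s ≤ j) with hi | hj
    · obtain ⟨i, rfl⟩ := Nat.exists_eq_add_of_le hi
      rw [show z * (x ^ (s + i) * y ^ j) = z * x ^ s * (x ^ i * y ^ j) by ring,
        show m + 2 * s = m + s + (i + j) by omega, pow_add]
      exact mul_mem_mul hzx (pow_mul_pow_mem_pow hxI hyI i j)
    · obtain ⟨j, rfl⟩ := Nat.exists_eq_add_of_le hj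
      rw [show z * (x ^ i * y ^ (s + j)) = z * y ^ s * (x ^ i * y ^ j) by ring,
        show m + 2 * s = m + s + (i + j) by omega, pow_add]
      exact mul_mem_mul hzy (pow_mul_pow_mem_pow hxI hyI i j)
  refine mem_rrPow_iff.2 ⟨r + 2 * s, ?_⟩
  calc span {z} * I ^ (r + 2 * s) = span {z} * span {x, y} ^ (2 * s) * I ^ r := by
        rw [pow_add_eq_pow_mul_pow hred le_rfl, mul_assoc]
    _ ≤ I ^ (m + 2 * s) * I ^ r := mul_mono_left hzJ
    _ = I ^ (m + (r + 2 * s)) := by rw [← pow_add]; ring_nf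

lemma rrPow_succ_le_span_pair_mul {m : ℕ} (hxI : x ∈ I) (hyI : y ∈ I)
    (hx : x ∈ nonZeroDivisors R) (hy : ∀ z : R, y * z ∈ span {x} → z ∈ span {x})
    (hred : ∀ n, r ≤ n → I ^ (n + 1) = span {x, y} * I ^ n) (hm : r ≤ m) :
    rrPow I (m + 1) ≤ span {x, y} * rrPow I m := by
  intro a ha
  obtain ⟨k, hk⟩ := mem_rrPow_iff.1 ha
  have hak {v : R} (hv : v ∈ I ^ k) : a * v ∈ I ^ (m + 1 + k) :=
    span_singleton_mul_le_iff.1 hk v hv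
  have hxk : a * x ^ k ∈ span {x, y} ^ (k + 1) * I ^ m := by
    rw [← pow_add_eq_pow_mul_pow hred hm, show m + (k + 1) = m + 1 + k by omega]
    exact hak (pow_mem_pow hxI k)
  obtain ⟨U, hU, D, rfl, hD⟩ :=
    exists_eq_add_sq_mul hx hy (a := a) k 0 (D := 0) hxk (by simp) (by ring)
  rw [zero_add, ← pow_add_eq_pow_mul_pow hred hm] at hD
  have hU' : U ∈ I ^ (m + 1) := hred m hm ▸ hU
  have hyD : y * D ∈ rrPow I m := by
    refine mem_rrPow_of_mul_pow_mem hxI hyI hred (s := k + 1) ?_ ?_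
    · rw [show y * D * x ^ (k + 1) = y * (x ^ (k + 1) * D) by ring, ← add_assoc, pow_succ' I]
      exact mul_mem_mul hyI hD
    · rw [show y * D * y ^ (k + 1) = (U + y ^ 2 * D) * y ^ k - U * y ^ k by ring,
        show m + (k + 1) = m + 1 + k by omega]
      exact sub_mem (hak (pow_mem_pow hyI k))
        (pow_add I _ k ▸ mul_mem_mul hU' (pow_mem_pow hyI k))
  refine add_mem (mul_mono_right (pow_le_rrPow I m) hU) ?_
  rw [sq, mul_assoc]
  exact mul_mem_mul (subset_span (by simp)) hyD

end Reduction

theorem stmt_8_general (R : Type*) [CommRing R]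
    (I : Ideal R)
    (x y : R) (hxI : x ∈ I) (hyI : y ∈ I)
    (hx : x ∈ nonZeroDivisors R)
    (hy : ∀ z : R, y * z ∈ Ideal.span {x} → z ∈ Ideal.span {x})
    (J : Ideal R) (hJ : J = Ideal.span {x, y})
    (r : ℕ) (hred : ∀ n : ℕ, r ≤ n → I ^ (n + 1) = J * I ^ n) :
    ∀ m : ℕ, r ≤ m → rrPow I (m + 1) = J * rrPow I m := by
  subst hJ
  intro m hm
  have hJI : span {x, y} ≤ I := span_le.2 (by simp [Set.insert_subset_iff, hxI, hyI])
  exact le_antisymm (rrPow_succ_le_span_pair_mul hxI hyI hx hy hred hm)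
    ((mul_mono_left hJI).trans (mul_rrPow_le I m))

/-- Let `(R,m)` be Noetherian local, `I` a regular ideal, and `x, y ∈ I` a regular
sequence on `R` such that `J = (x,y)` is a reduction of `I` with `I^{n+1} = JI^n` for all
`n ≥ r`.  Then `~(I^{m+1}) = J·~(I^m)` for all `m ≥ r`; in particular the Ratliff-Rush
reduction number of `I` with respect to `J` is at most `r_J(I)`. -/
theorem stmt_8 (R : Type*) [CommRing R] [IsNoetherianRing R] [IsLocalRing R]
    (I : Ideal R) (hreg : ∃ z ∈ I, z ∈ nonZeroDivisors R)
    (x y : R) (hxI : x ∈ I) (hyI : y ∈ I)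
    (hx : x ∈ nonZeroDivisors R)
    (hy : ∀ z : R, y * z ∈ Ideal.span {x} → z ∈ Ideal.span {x})
    (J : Ideal R) (hJ : J = Ideal.span {x, y})
    (r : ℕ) (hred : ∀ n : ℕ, r ≤ n → I ^ (n + 1) = J * I ^ n) :
    ∀ m : ℕ, r ≤ m → rrPow I (m + 1) = J * rrPow I m :=
  stmt_8_general R I x y hxI hyI hx hy J hJ r hred
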